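/- Let P be a finite p-group, R = F_p, and let I be the augmentation ideal of RP. Then the coefficient system (RP)^?/I_0 decomposes as a direct sum (RP)^?/(RP)_0 ⊕ R_0, where for an RP-module M, M_0 denotes the coefficient system with value M at the trivial subgroup and 0 elsewhere, and M^? denotes the fixed-point system. -/

import Mathlib

open CategoryTheory

universe u

variable (R : Type) [CommRing R] (G : Type) [Group G]

/-- The category of `G`-sets. -/
abbrev GSet := Action (Type) (MonCat.of G)

/-- The orbit `G/H` as a `G`-set. -/
def orbitGSet (H : Subgroup G) : GSet G := Action.ofMulAction G (G ⧸ H)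

/-- A `G`-set is an orbit if it is isomorphic to some `G/H`. -/
def IsOrbit (X : GSet G) : Prop := ∃ H : Subgroup G, Nonempty (X ≅ orbitGSet G H)

/-- The orbit category of `G`. -/
def OrbitCat := ObjectProperty.FullSubcategory (IsOrbit G)

instance : Category (OrbitCat G) := ObjectProperty.FullSubcategory.category _

/-- Coefficient systems for `G` over `R`: contravariant functors from the orbit
category of `G` to `R`-modules. -/
abbrev CoeffSystem := (OrbitCat G)ᵒᵖ ⥤ ModuleCat R

/-- The orbit `G/H` as an object of the orbit category. -/
def orbitObj (H : Subgroup G) : OrbitCat G := ⟨orbitGSet G H, H, ⟨Iso.refl _⟩⟩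

/-- Forget an orbit-category morphism to a morphism of `G`-sets. -/
def toGHom {O O' : OrbitCat G} (u : O ⟶ O') : O.obj ⟶ O'.obj := u.hom

variable {G} in
@[simp] lemma toGHom_id (O : OrbitCat G) : toGHom G (𝟙 O) = 𝟙 O.obj := rfl

variable {G} in
@[simp] lemma toGHom_comp {O O' O'' : OrbitCat G} (u : O ⟶ O') (v : O' ⟶ O'') :
    toGHom G (u ≫ v) = toGHom G u ≫ toGHom G v := rfl

/-- The coefficient system `R[X^?]`: its value on an orbit `O` is the free `R`-module
on the set of `G`-maps `O ⟶ X`, which for `O = G/K` is the fixed point set `X^K`. -/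
noncomputable def freeSystem (X : GSet G) : CoeffSystem R G where
  obj O := ModuleCat.of R ((O.unop.obj ⟶ X) →₀ R)
  map {O O'} f := ModuleCat.ofHom (Finsupp.lmapDomain R R (fun φ => toGHom G f.unop ≫ φ))
  map_id O := by
    have h : (fun φ : O.unop.obj ⟶ X => toGHom G (𝟙 O.unop) ≫ φ) = _root_.id := by
      funext φ
      simp
    show ModuleCat.ofHom (Finsupp.lmapDomain R R _) = _
    simp only [unop_id]
    rw [h, Finsupp.lmapDomain_id]
    rfl
  map_comp {O O' O''} f g := by
    have h : (fun φ : O.unop.obj ⟶ X => toGHom G (g.unop ≫ f.unop) ≫ φ)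
        = (fun φ : O'.unop.obj ⟶ X => toGHom G g.unop ≫ φ) ∘
          (fun φ : O.unop.obj ⟶ X => toGHom G f.unop ≫ φ) := by
      funext φ
      simp
    show ModuleCat.ofHom (Finsupp.lmapDomain R R _) = _
    simp only [unop_comp]
    rw [h, Finsupp.lmapDomain_comp]
    rfl

/-- The representable coefficient system `R[G/H^?]`. -/
noncomputable def orbitSystem (H : Subgroup G) : CoeffSystem R G :=
  freeSystem R G (orbitGSet G H)

/-- Evaluation of a coefficient system at a subgroup `H`, i.e. at the orbit `G/H`. -/
def evalAt (L : CoeffSystem R G) (H : Subgroup G) : ModuleCat R :=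
  L.obj (Opposite.op (orbitObj G H))

open CategoryTheory.Limits in
instance (R : Type) [CommRing R] (G : Type) [Group G] :
    HasFiniteBiproducts (CoeffSystem R G) :=
  HasFiniteBiproducts.of_hasFiniteProducts
section FixedSystems

variable {R : Type} [CommRing R] {G : Type} [Group G]
variable {V : Type} [AddCommGroup V] [Module R V]

/-- The `R`-module of `G`-equivariant maps from a `G`-set to a representation. -/
def eqvMaps (ρ : Representation R G V) (O : GSet G) : Submodule R (O.V → V) where
  carrier := {φ | ∀ (g : G) (x : O.V), φ (O.ρ g x) = ρ g (φ x)}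
  add_mem' := by intro φ ψ hφ hψ g x; simp [hφ g x, hψ g x]
  zero_mem' := by intro g x; simp
  smul_mem' := by intro c φ hφ g x; simp [hφ g x]

/-- The fixed point coefficient system `V^?` of a representation `V`:
its value on the orbit `G/H` is (the `R`-module of equivariant maps `G/H → V`,
canonically isomorphic to) the fixed point module `V^H`. -/
noncomputable def fixedSystem (ρ : Representation R G V) : CoeffSystem R G where
  obj O := ModuleCat.of R (eqvMaps ρ O.unop.obj)
  map {O O'} f := ModuleCat.ofHom
    { toFun := fun φ => ⟨φ.1 ∘ (toGHom G f.unop).hom, by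
        intro g x
        have hc : (toGHom G f.unop).hom ((O'.unop.obj).ρ g x)
            = (O.unop.obj).ρ g ((toGHom G f.unop).hom x) :=
          ConcreteCategory.congr_hom ((toGHom G f.unop).comm g) x
        simp only [Function.comp_apply]
        rw [hc]
        exact φ.2 g _⟩
      map_add' := fun φ ψ => rfl
      map_smul' := fun c φ => rfl }
  map_id O := rfl
  map_comp f g := rfl

/-- Right translation by `g` on the free orbit `G/1`, as a `G`-map. -/
def rmulHom (g : G) : orbitGSet G (⊥ : Subgroup G) ⟶ orbitGSet G (⊥ : Subgroup G) where
  hom := TypeCat.ofHom (Quotient.map' (· * g) (by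
    intro a b h
    rw [QuotientGroup.leftRel_apply] at h ⊢
    simp only [Subgroup.mem_bot] at h ⊢
    have hab : a = b := inv_mul_eq_one.mp h
    subst hab
    group))
  comm := by
    intro h
    ext x
    induction x using Quotient.inductionOn' with
    | h a =>
      exact congrArg (Quotient.mk'' (s₁ := QuotientGroup.leftRel (⊥ : Subgroup G))) (mul_assoc h a g)

/-- Right translation as a morphism of the orbit category. -/
def rmulOrbit (g : G) : orbitObj G (⊥ : Subgroup G) ⟶ orbitObj G (⊥ : Subgroup G) :=
  ObjectProperty.homMk (rmulHom g)

lemma rmulOrbit_comp (g h : G) :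
    rmulOrbit (G := G) g ≫ rmulOrbit h = rmulOrbit (g * h) := by
  apply ObjectProperty.hom_ext
  apply Action.hom_ext
  ext x
  induction x using Quotient.inductionOn' with
  | h a => show Quotient.mk'' ((a * g) * h) = Quotient.mk'' (a * (g * h)); rw [mul_assoc]

lemma rmulOrbit_one : rmulOrbit (G := G) 1 = 𝟙 _ := by
  apply ObjectProperty.hom_ext
  apply Action.hom_ext
  ext x
  induction x using Quotient.inductionOn' with
  | h a => show Quotient.mk'' (a * 1) = Quotient.mk'' a; rw [mul_one]

/-- The `RG`-module structure on `L(1)`, the evaluation of a coefficient system at the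
trivial subgroup, given by the conjugation (right translation) action. -/
noncomputable def rhoOne (L : CoeffSystem R G) : Representation R G (evalAt R G L ⊥) where
  toFun g := (L.map ((rmulOrbit g).op)).hom
  map_one' := by
    have key : L.map ((rmulOrbit (G := G) 1).op) = 𝟙 _ := by
      rw [rmulOrbit_one, op_id, L.map_id]
    exact congrArg ModuleCat.Hom.hom key
  map_mul' g h := by
    have key : L.map ((rmulOrbit (G := G) (g * h)).op)
        = L.map ((rmulOrbit h).op) ≫ L.map ((rmulOrbit g).op) := by
      rw [← L.map_comp, ← op_comp, rmulOrbit_comp]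
    exact congrArg ModuleCat.Hom.hom key

/-- The module of `RG`-linear maps `L(1) → V`. -/
noncomputable def eqvHom (ρ : Representation R G V) (L : CoeffSystem R G) :
    Submodule R (evalAt R G L ⊥ →ₗ[R] V) where
  carrier := {φ | ∀ g : G, φ.comp (rhoOne L g) = (ρ g).comp φ}
  add_mem' := by
    intro φ ψ hφ hψ g
    ext x
    have h1 := LinearMap.congr_fun (hφ g) x
    have h2 := LinearMap.congr_fun (hψ g) x
    simp only [LinearMap.comp_apply] at h1 h2
    simp [h1, h2]
  zero_mem' := by intro g; ext x; simp
  smul_mem' := by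
    intro c φ hφ g
    ext x
    have h1 := LinearMap.congr_fun (hφ g) x
    simp only [LinearMap.comp_apply] at h1
    simp [h1]

end FixedSystems

section Subsystems

variable {R : Type} [CommRing R] {G : Type} [Group G]

/-- A subsystem of a coefficient system: a submodule at each orbit, closed under the
structure maps. -/
structure Subsystem (L : CoeffSystem R G) where
  toFun : ∀ O : (OrbitCat G)ᵒᵖ, Submodule R (L.obj O)
  map_mem : ∀ {O O' : (OrbitCat G)ᵒᵖ} (f : O ⟶ O') (x : L.obj O),
    x ∈ toFun O → L.map f x ∈ toFun O'

/-- The subsystem of `R[X^?]` spanned, at each orbit `O`, by the maps `O → X` taking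
values in a subset `Y ⊆ X`; for `Y = S_A X` this is `R[(S_A X)^?]`. -/
def subFree (X : GSet G) (Y : Set X.V) : Subsystem (freeSystem R G X) where
  toFun O := Finsupp.supported R R {φ : O.unop.obj ⟶ X | ∀ o, φ.hom o ∈ Y}
  map_mem := by
    classical
    intro O O' f x hx
    refine (Finsupp.mem_supported' R _).2 ?_
    intro ψ hψ
    replace hx := (Finsupp.mem_supported R (x : (O.unop.obj ⟶ X) →₀ R)).1 hx
    show Finsupp.mapDomain (fun φ => toGHom G f.unop ≫ φ) x ψ = 0
    by_contra h0
    have hmem := Finsupp.mapDomain_support (f := fun φ => toGHom G f.unop ≫ φ)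
      (Finsupp.mem_support_iff.2 h0)
    rcases Finset.mem_image.1 hmem with ⟨φ, hφ, rfl⟩
    apply hψ
    intro o
    exact hx hφ ((toGHom G f.unop).hom o)

end Subsystems

section ZeroSystems

variable {R : Type} [CommRing R] {G : Type} [Group G]
variable {V : Type} [AddCommGroup V] [Module R V]

/-- A `G`-set is free if only the identity fixes a point. -/
def FreeGSet (X : GSet G) : Prop := ∀ (g : G) (x : X.V), X.ρ g x = x → g = 1

lemma freeGSet_of_hom {X Y : GSet G} (u : Y ⟶ X) (hX : FreeGSet X) : FreeGSet Y := by
  intro g y hg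
  refine hX g (u.hom y) ?_
  have hc : u.hom (Y.ρ g y) = X.ρ g (u.hom y) := ConcreteCategory.congr_hom (u.comm g) y
  rw [← hc, hg]

/-- The subsystem `W_0` of the fixed point system `V^?`: it has value (the equivariant
maps with values in) `W` at the trivial subgroup (i.e. on free orbits) and `0` at all
nontrivial subgroups. For `W = ⊤` this is `V_0` and for the augmentation ideal it is
`I_0`. -/
noncomputable def zeroSub (ρ : Representation R G V) (W : Submodule R V) : Subsystem (fixedSystem ρ) where
  toFun O :=
    { carrier := {φ | (∀ x, (φ : eqvMaps ρ O.unop.obj).1 x ∈ W) ∧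
        (¬ FreeGSet O.unop.obj → φ = 0)}
      add_mem' := by
        rintro φ ψ ⟨hφ1, hφ2⟩ ⟨hψ1, hψ2⟩
        refine ⟨fun x => W.add_mem (hφ1 x) (hψ1 x), fun h => by rw [hφ2 h, hψ2 h, add_zero]⟩
      zero_mem' := ⟨fun x => W.zero_mem, fun _ => rfl⟩
      smul_mem' := by
        rintro c φ ⟨hφ1, hφ2⟩
        refine ⟨fun x => W.smul_mem c (hφ1 x), fun h => by rw [hφ2 h, smul_zero]⟩ }
  map_mem := by
    rintro O O' f φ ⟨h1, h2⟩
    constructor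
    · intro x
      exact h1 _
    · intro hO'
      by_cases hO : FreeGSet O.unop.obj
      · exact absurd (freeGSet_of_hom (toGHom G f.unop) hO) hO'
      · rw [h2 hO]
        exact map_zero _
end ZeroSystems

section SubsystemCat

variable {R : Type} [CommRing R] {G : Type} [Group G]

/-- A subsystem as a coefficient system in its own right. -/
noncomputable def Subsystem.toSystem {L : CoeffSystem R G} (S : Subsystem L) :
    CoeffSystem R G where
  obj O := ModuleCat.of R (S.toFun O)
  map {O O'} f := ModuleCat.ofHom ((L.map f).hom.restrict (fun x hx => S.map_mem f x hx))
  map_id O := by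
    ext x
    show L.map (𝟙 O) x.1 = x.1
    rw [L.map_id]
    rfl
  map_comp {O O' O''} f g := by
    ext x
    show L.map (f ≫ g) x.1 = L.map g (L.map f x.1)
    rw [L.map_comp]
    rfl

/-- The inclusion of a subsystem. -/
noncomputable def Subsystem.incl {L : CoeffSystem R G} (S : Subsystem L) :
    S.toSystem ⟶ L where
  app O := ModuleCat.ofHom (S.toFun O).subtype
  naturality O O' f := rfl

/-- The morphism of systems induced by an inclusion of subsystems. -/
noncomputable def Subsystem.homOfLe {L : CoeffSystem R G} {S T : Subsystem L}
    (h : ∀ O, S.toFun O ≤ T.toFun O) : S.toSystem ⟶ T.toSystem where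
  app O := ModuleCat.ofHom (Submodule.inclusion (h O))
  naturality O O' f := rfl

end SubsystemCat

/-!
At a free orbit `O` we have `V_0(O) = V^?(O)`, so `(V^?/W_0)(O) = (V_0/W_0)(O)`; at a non-free
orbit `V_0(O) = W_0(O) = 0`, so `(V^?/W_0)(O) = (V^?/V_0)(O)`. These objectwise splittings are
natural as soon as `W` contains every vector fixed by a nontrivial group element, because then
restriction from a non-free orbit to a free one lands in `W`. For `V = F_p[P]` and `W = I` this
holds since a vector fixed by `g ≠ 1` is constant on the right cosets of `⟨g⟩`, so its augmentation
is a multiple of `|⟨g⟩|`, a positive power of `p`.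
-/

namespace Subsystem

open CategoryTheory.Limits

variable {R : Type} [CommRing R] {G : Type} [Group G] {L : CoeffSystem R G}

noncomputable def quotient (S : Subsystem L) : CoeffSystem R G where
  obj O := ModuleCat.of R (L.obj O ⧸ S.toFun O)
  map f := ModuleCat.ofHom (Submodule.mapQ _ _ (L.map f).hom fun x hx => S.map_mem f x hx)
  map_id _ := ModuleCat.hom_ext (Submodule.linearMap_qext _ (by ext; simp))
  map_comp _ _ := ModuleCat.hom_ext (Submodule.linearMap_qext _ (by ext; simp))

noncomputable def mkQ (S : Subsystem L) : L ⟶ S.quotient where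
  app O := ModuleCat.ofHom (S.toFun O).mkQ

variable {S : Subsystem L} {O : (OrbitCat G)ᵒᵖ}

lemma mkQ_app_eq_zero {x : L.obj O} (hx : x ∈ S.toFun O) : S.mkQ.app O x = 0 :=
  (Submodule.Quotient.mk_eq_zero _).2 hx

@[simp] lemma mkQ_app_incl_app (x : S.toSystem.obj O) : S.mkQ.app O (S.incl.app O x) = 0 :=
  mkQ_app_eq_zero x.2

lemma comp_mkQ_app_eq_zero {M : ModuleCat R} (u : M ⟶ L.obj O) (hu : ∀ x, u x ∈ S.toFun O) :
    u ≫ S.mkQ.app O = 0 := by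
  ext x
  exact mkQ_app_eq_zero (hu x)

lemma quotient_obj_hom_ext {M : ModuleCat R} {u v : S.quotient.obj O ⟶ M}
    (h : ∀ x, u (S.mkQ.app O x) = v (S.mkQ.app O x)) : u = v :=
  ModuleCat.hom_ext (Submodule.linearMap_qext _ (LinearMap.ext h))

lemma quotient_hom_ext {M : CoeffSystem R G} {α β : S.quotient ⟶ M}
    (h : ∀ O x, α.app O (S.mkQ.app O x) = β.app O (S.mkQ.app O x)) : α = β :=
  NatTrans.ext (funext fun O => quotient_obj_hom_ext (h O))

instance : Epi S.mkQ :=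
  have (O : (OrbitCat G)ᵒᵖ) : Epi (S.mkQ.app O) :=
    (ModuleCat.epi_iff_surjective _).2 (Submodule.mkQ_surjective _)
  NatTrans.epi_of_epi_app _

variable (S) in
noncomputable def desc {M : CoeffSystem R G} (g : L ⟶ M)
    (hg : ∀ O, ∀ x ∈ S.toFun O, g.app O x = 0) : S.quotient ⟶ M where
  app O := ModuleCat.ofHom ((S.toFun O).liftQ (g.app O).hom fun x hx => hg O x hx)
  naturality _ _ f := quotient_obj_hom_ext fun x => ConcreteCategory.congr_hom (g.naturality f) x

@[simp] lemma desc_app_mkQ {M : CoeffSystem R G} (g : L ⟶ M)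
    (hg : ∀ O, ∀ x ∈ S.toFun O, g.app O x = 0) (x : L.obj O) :
    (S.desc g hg).app O (S.mkQ.app O x) = g.app O x :=
  rfl

variable (S) in
noncomputable def isColimitCokernelCofork {M : CoeffSystem R G} (f : M ⟶ L)
    (hf : ∀ O, LinearMap.range (f.app O).hom = S.toFun O) :
    IsColimit (CokernelCofork.ofπ (f := f) S.mkQ
      (by ext O x; exact mkQ_app_eq_zero (hf O ▸ LinearMap.mem_range_self _ x))) :=
  CokernelCofork.IsColimit.ofπ' _ _ fun g hg =>
    ⟨S.desc g fun O x hx => by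
      obtain ⟨y, rfl⟩ := (hf O).symm ▸ hx
      exact ConcreteCategory.congr_hom (NatTrans.congr_app hg O) y, rfl⟩

variable (S) in
noncomputable def cokernelIsoQuotient {M : CoeffSystem R G} (f : M ⟶ L)
    (hf : ∀ O, LinearMap.range (f.app O).hom = S.toFun O) : cokernel f ≅ S.quotient :=
  (colimit.isColimit _).coconePointUniqueUpToIso (S.isColimitCokernelCofork f hf)

variable (S) in
noncomputable def cokernelInclIso : cokernel S.incl ≅ S.quotient :=
  S.cokernelIsoQuotient S.incl fun _ => Submodule.range_subtype _

noncomputable def subsystemOf (S T : Subsystem L) : Subsystem T.toSystem where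
  toFun O := (S.toFun O).comap (T.toFun O).subtype
  map_mem f x hx := S.map_mem f x.1 hx

noncomputable def cokernelHomOfLeIso {T : Subsystem L} (h : ∀ O, S.toFun O ≤ T.toFun O) :
    cokernel (homOfLe h) ≅ (S.subsystemOf T).quotient :=
  (S.subsystemOf T).cokernelIsoQuotient (homOfLe h) fun O => Submodule.range_inclusion _ _ (h O)

noncomputable def quotientMapOfLe {T : Subsystem L} (h : ∀ O, S.toFun O ≤ T.toFun O) :
    S.quotient ⟶ T.quotient :=
  S.desc T.mkQ fun O _ hx => mkQ_app_eq_zero (h O hx)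

@[simp] lemma quotientMapOfLe_app_mkQ {T : Subsystem L} (h : ∀ O, S.toFun O ≤ T.toFun O)
    (x : L.obj O) : (quotientMapOfLe h).app O (S.mkQ.app O x) = T.mkQ.app O x :=
  rfl

noncomputable def quotientSubsystemOfMap (S T : Subsystem L) :
    (S.subsystemOf T).quotient ⟶ S.quotient :=
  (S.subsystemOf T).desc (T.incl ≫ S.mkQ) fun _ _ hx => mkQ_app_eq_zero hx

@[simp] lemma quotientSubsystemOfMap_app_mkQ (T : Subsystem L) (x : T.toSystem.obj O) :
    (quotientSubsystemOfMap S T).app O ((S.subsystemOf T).mkQ.app O x) =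
      S.mkQ.app O (T.incl.app O x) :=
  rfl

end Subsystem

theorem Subgroup.sum_eq_card_nsmul_sum_quotient {α M : Type*} [Group α] [Fintype α]
    [AddCommMonoid M] (s : Subgroup α) [Fintype (α ⧸ s)] (f : α → M)
    (hf : ∀ a, ∀ h ∈ s, f (a * h) = f a) :
    ∑ a, f a = Nat.card s • ∑ q : α ⧸ s, f q.out := by
  classical
  have hrep (a : α) : f a = f (a : α ⧸ s).out := by
    obtain ⟨h, hh⟩ := QuotientGroup.mk_out_eq_mul s a
    rw [hh, hf a h h.2]
  calc ∑ a, f a = ∑ x : (α ⧸ s) × s, f x.1.out :=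
        Fintype.sum_equiv Subgroup.groupEquivQuotientProdSubgroup _ _ fun a => hrep a
    _ = Nat.card s • ∑ q : α ⧸ s, f q.out := by
        rw [Fintype.sum_prod_type, Finset.smul_sum]
        simp [Nat.card_eq_fintype_card]

theorem IsPGroup.mem_augmentation_of_fixed {p : ℕ} [Fact p.Prime] {k P : Type*} [CommRing k]
    [CharP k p] [Group P] [Fintype P] (hP : IsPGroup p P) {g : P} (hg : g ≠ 1)
    {v : MonoidAlgebra k P} (hv : Representation.ofMulAction k P P g v = v) :
    v ∈ LinearMap.ker ((Finsupp.linearCombination k fun _ : P => (1 : k)).comp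
      (MonoidAlgebra.coeffLinearEquiv k).toLinearMap) := by
  classical
  set c := MonoidAlgebra.coeffLinearEquiv k v
  have hc (a : P) : c (g * a) = c a := by
    have : c.mapDomain (g • ·) = c := congrArg (MonoidAlgebra.coeffLinearEquiv k) hv
    rw [← Finsupp.mapDomain_apply (MulAction.injective g) c a, this]
    rfl
  have hpow (n : ℕ) (a : P) : c (g ^ n * a) = c a := by
    induction n with
    | zero => simp
    | succ n ih => rw [pow_succ', mul_assoc, hc, ih]
  set H := Subgroup.zpowers g
  have hH (a h : P) (hh : h ∈ H) : c (a * h)⁻¹ = c a⁻¹ := by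
    obtain ⟨n, hn⟩ := mem_powers_iff_mem_zpowers.2 (H.inv_mem hh)
    rw [mul_inv_rev, ← hn, hpow]
  have hcard : (Nat.card H : k) = 0 := by
    refine (CharP.cast_eq_zero_iff k p _).2 ((hP.to_subgroup H).card_eq_or_dvd.resolve_left ?_)
    rwa [Nat.card_zpowers, orderOf_eq_one_iff]
  calc (Finsupp.linearCombination k fun _ : P => (1 : k)) c = ∑ a, c a⁻¹ := by
        rw [Finsupp.linearCombination_apply, Finsupp.sum_fintype _ _ (by simp)]
        simpa using (Equiv.sum_comp (Equiv.inv P) c).symm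
    _ = 0 := by
        rw [H.sum_eq_card_nsmul_sum_quotient _ hH, nsmul_eq_mul, hcard, zero_mul]

section Orbits

variable {G : Type} [Group G] {X : GSet G}

lemma IsOrbit.exists_smul_eq (hX : IsOrbit G X) (x y : X.V) : ∃ a : G, X.ρ a x = y := by
  obtain ⟨H, ⟨e⟩⟩ := hX
  let e' : X.V ≃ G ⧸ H := ((Action.forget _ _).mapIso e).toEquiv
  have he (g : G) (z : X.V) : e' (X.ρ g z) = g • e' z := ConcreteCategory.congr_hom (e.hom.comm g) z
  obtain ⟨a, ha⟩ := MulAction.exists_smul_eq G (e' x) (e' y)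
  exact ⟨a, e'.injective (by rw [he, ha])⟩

lemma IsOrbit.exists_ne_one_fixed (hX : IsOrbit G X) (hX' : ¬ FreeGSet X) (x : X.V) :
    ∃ g : G, g ≠ 1 ∧ X.ρ g x = x := by
  simp only [FreeGSet, not_forall] at hX'
  obtain ⟨g, y, hy, hg⟩ := hX'
  obtain ⟨a, rfl⟩ := hX.exists_smul_eq y x
  refine ⟨a * g * a⁻¹, by simpa using hg, ?_⟩
  simp [map_mul, hy]

end Orbits

section Decomposition

open CategoryTheory.Limits Subsystem

variable {R : Type} [CommRing R] {G : Type} [Group G] {V : Type} [AddCommGroup V] [Module R V]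
  {ρ : Representation R G V} {W : Submodule R V} {O O' : (OrbitCat G)ᵒᵖ}

lemma eqvMaps_apply_mem_of_not_free (hW : ∀ g : G, g ≠ 1 → ∀ v, ρ g v = v → v ∈ W)
    {X : OrbitCat G} (hX : ¬ FreeGSet X.obj) (φ : eqvMaps ρ X.obj) (x : X.obj.V) : φ.1 x ∈ W := by
  obtain ⟨g, hg, hx⟩ := X.property.exists_ne_one_fixed hX x
  exact hW g hg _ (by rw [← φ.2 g x, hx])

lemma fixedSystem_map_mem_zeroSub_of_not_free (hW : ∀ g : G, g ≠ 1 → ∀ v, ρ g v = v → v ∈ W)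
    (f : O ⟶ O') (hO : ¬ FreeGSet O.unop.obj) (hO' : FreeGSet O'.unop.obj)
    (φ : (fixedSystem ρ).obj O) : (fixedSystem ρ).map f φ ∈ (zeroSub ρ W).toFun O' :=
  ⟨fun _ => eqvMaps_apply_mem_of_not_free hW hO φ _, fun h => absurd hO' h⟩

lemma mem_zeroSub_top_of_free (hO : FreeGSet O.unop.obj) (φ : (fixedSystem ρ).obj O) :
    φ ∈ (zeroSub ρ ⊤).toFun O :=
  ⟨fun _ => Submodule.mem_top, fun h => absurd hO h⟩

lemma zeroSub_mono {W' : Submodule R V} (h : W ≤ W') (O : (OrbitCat G)ᵒᵖ) :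
    (zeroSub ρ W).toFun O ≤ (zeroSub ρ W').toFun O :=
  fun _ hφ => ⟨fun x => h (hφ.1 x), hφ.2⟩

@[simp] lemma mkQ_app_zeroSub_top_of_free (hO : FreeGSet O.unop.obj) (φ : (fixedSystem ρ).obj O) :
    (zeroSub ρ ⊤).mkQ.app O φ = 0 :=
  mkQ_app_eq_zero (mem_zeroSub_top_of_free hO φ)

@[simp] lemma mkQ_app_subsystemOf_of_not_free (hO : ¬ FreeGSet O.unop.obj)
    (x : (zeroSub ρ ⊤).toSystem.obj O) :
    ((zeroSub ρ W).subsystemOf (zeroSub ρ ⊤)).mkQ.app O x = 0 := by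
  rw [show x = 0 from Subtype.ext (x.2.2 hO), map_zero]

noncomputable def toZeroSubTop (hO : FreeGSet O.unop.obj) :
    (fixedSystem ρ).obj O ⟶ (zeroSub ρ ⊤).toSystem.obj O :=
  ModuleCat.ofHom (LinearMap.codRestrict _ LinearMap.id (mem_zeroSub_top_of_free hO))

@[simp] lemma toZeroSubTop_incl_app (hO : FreeGSet O.unop.obj)
    (x : (zeroSub ρ ⊤).toSystem.obj O) : toZeroSubTop hO ((zeroSub ρ ⊤).incl.app O x) = x :=
  rfl

@[simp] lemma incl_app_toZeroSubTop (hO : FreeGSet O.unop.obj) (φ : (fixedSystem ρ).obj O) :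
    (zeroSub ρ ⊤).incl.app O (toZeroSubTop hO φ) = φ :=
  rfl

lemma fixedSystem_map_comp_toZeroSubTop (f : O ⟶ O') (hO : FreeGSet O.unop.obj) :
    (fixedSystem ρ).map f ≫ toZeroSubTop (freeGSet_of_hom (toGHom G f.unop) hO) =
      toZeroSubTop hO ≫ (zeroSub ρ ⊤).toSystem.map f :=
  rfl

variable (hW : ∀ g : G, g ≠ 1 → ∀ v, ρ g v = v → v ∈ W)

open Classical in
noncomputable def nonfreeMkQ : fixedSystem ρ ⟶ (zeroSub ρ W).quotient where
  app O := if FreeGSet O.unop.obj then 0 else (zeroSub ρ W).mkQ.app O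
  naturality O O' f := by
    by_cases hO : FreeGSet O.unop.obj
    · simp [hO, freeGSet_of_hom (toGHom G f.unop) hO]
    by_cases hO' : FreeGSet O'.unop.obj
    · simp only [hO, hO', if_true, if_false]
      rw [comp_zero, ← NatTrans.naturality,
        comp_mkQ_app_eq_zero _ (fixedSystem_map_mem_zeroSub_of_not_free hW f hO hO')]
    · simp [hO, hO']

open Classical in
noncomputable def freeMkQ :
    fixedSystem ρ ⟶ ((zeroSub ρ W).subsystemOf (zeroSub ρ ⊤)).quotient where
  app O := if hO : FreeGSet O.unop.obj then
      toZeroSubTop hO ≫ ((zeroSub ρ W).subsystemOf (zeroSub ρ ⊤)).mkQ.app O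
    else 0
  naturality O O' f := by
    by_cases hO : FreeGSet O.unop.obj
    · simp only [hO, freeGSet_of_hom (toGHom G f.unop) hO, dite_true]
      rw [reassoc_of% fixedSystem_map_comp_toZeroSubTop f hO, Category.assoc,
        ← NatTrans.naturality]
    by_cases hO' : FreeGSet O'.unop.obj
    · simp only [hO, hO', dite_true, dite_false]
      rw [zero_comp, ← Category.assoc]
      exact comp_mkQ_app_eq_zero _ (fixedSystem_map_mem_zeroSub_of_not_free hW f hO hO')
    · simp [hO, hO']

@[simp] lemma nonfreeMkQ_app_of_free (hO : FreeGSet O.unop.obj) : (nonfreeMkQ hW).app O = 0 :=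
  if_pos hO

@[simp] lemma nonfreeMkQ_app_of_not_free (hO : ¬ FreeGSet O.unop.obj) :
    (nonfreeMkQ hW).app O = (zeroSub ρ W).mkQ.app O :=
  if_neg hO

@[simp] lemma freeMkQ_app_of_free (hO : FreeGSet O.unop.obj) :
    (freeMkQ hW).app O = toZeroSubTop hO ≫ ((zeroSub ρ W).subsystemOf (zeroSub ρ ⊤)).mkQ.app O :=
  dif_pos hO

@[simp] lemma freeMkQ_app_of_not_free (hO : ¬ FreeGSet O.unop.obj) : (freeMkQ hW).app O = 0 :=
  dif_neg hO

noncomputable def quotientZeroSubSection : (zeroSub ρ ⊤).quotient ⟶ (zeroSub ρ W).quotient :=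
  (zeroSub ρ ⊤).desc (nonfreeMkQ hW) fun O φ hφ => by
    by_cases hO : FreeGSet O.unop.obj
    · simp [hO]
    · simp [hO, hφ.2 hO]

noncomputable def quotientZeroSubRetraction :
    (zeroSub ρ W).quotient ⟶ ((zeroSub ρ W).subsystemOf (zeroSub ρ ⊤)).quotient :=
  (zeroSub ρ W).desc (freeMkQ hW) fun O φ hφ => by
    by_cases hO : FreeGSet O.unop.obj
    · rw [freeMkQ_app_of_free hW hO]
      exact mkQ_app_eq_zero hφ
    · simp [hO]

noncomputable def quotientZeroSubBicone :
    BinaryBicone (zeroSub ρ ⊤).quotient ((zeroSub ρ W).subsystemOf (zeroSub ρ ⊤)).quotient where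
  pt := (zeroSub ρ W).quotient
  fst := quotientMapOfLe (zeroSub_mono le_top)
  snd := quotientZeroSubRetraction hW
  inl := quotientZeroSubSection hW
  inr := quotientSubsystemOfMap _ _
  inl_fst := quotient_hom_ext fun O φ => by
    by_cases hO : FreeGSet O.unop.obj <;> simp [quotientZeroSubSection, hO]
  inl_snd := quotient_hom_ext fun O φ => by
    by_cases hO : FreeGSet O.unop.obj <;>
      simp [quotientZeroSubSection, quotientZeroSubRetraction, hO]
  inr_fst := quotient_hom_ext fun O φ => by simp
  inr_snd := quotient_hom_ext fun O φ => by
    by_cases hO : FreeGSet O.unop.obj <;> simp [quotientZeroSubRetraction, hO]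

lemma quotientZeroSub_total :
    quotientMapOfLe (zeroSub_mono le_top) ≫ quotientZeroSubSection hW +
      quotientZeroSubRetraction hW ≫ quotientSubsystemOfMap _ _ = 𝟙 (zeroSub ρ W).quotient :=
  quotient_hom_ext fun O φ => by
    by_cases hO : FreeGSet O.unop.obj <;>
      simp [quotientZeroSubSection, quotientZeroSubRetraction, hO]

noncomputable def quotientZeroSubIsoBiprod :
    (zeroSub ρ W).quotient ≅
      (zeroSub ρ ⊤).quotient ⊞ ((zeroSub ρ W).subsystemOf (zeroSub ρ ⊤)).quotient :=
  biprod.uniqueUpToIso _ _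
    (isBinaryBilimitOfTotal (quotientZeroSubBicone hW) (quotientZeroSub_total hW))

end Decomposition

open CategoryTheory.Limits in
/-- for a finite `p`-group `P` over `R = F_p`, with `I` the augmentation
ideal of `RP`, the coefficient system `(RP)^?/I_0` decomposes as
`(RP)^?/(RP)_0 ⊕ R_0`, where `R_0 = (RP)_0/I_0`. -/
theorem quotient_by_I0_decomposition (p : ℕ) [Fact p.Prime] (P : Type) [Group P]
    [Fintype P] (hP : IsPGroup p P) :
    Nonempty
      ((cokernel (Subsystem.incl (zeroSub (Representation.ofMulAction (ZMod p) P P)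
          (LinearMap.ker ((Finsupp.linearCombination (ZMod p) (fun _ : P => (1 : ZMod p))).comp
            (MonoidAlgebra.coeffLinearEquiv (ZMod p)).toLinearMap))))) ≅
        (cokernel (Subsystem.incl (zeroSub (Representation.ofMulAction (ZMod p) P P)
          (⊤ : Submodule (ZMod p) (MonoidAlgebra (ZMod p) P))))) ⊞
        (cokernel (Subsystem.homOfLe
          (S := zeroSub (Representation.ofMulAction (ZMod p) P P)
            (LinearMap.ker ((Finsupp.linearCombination (ZMod p) (fun _ : P => (1 : ZMod p))).comp
            (MonoidAlgebra.coeffLinearEquiv (ZMod p)).toLinearMap)))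
          (T := zeroSub (Representation.ofMulAction (ZMod p) P P)
            (⊤ : Submodule (ZMod p) (MonoidAlgebra (ZMod p) P)))
          (fun O => fun φ hφ => ⟨fun x => Submodule.mem_top, hφ.2⟩)))) := by
  exact ⟨(zeroSub _ _).cokernelInclIso ≪≫
    quotientZeroSubIsoBiprod (fun _ hg _ hv => hP.mem_augmentation_of_fixed hg hv) ≪≫
    biprod.mapIso (zeroSub _ _).cokernelInclIso.symm (Subsystem.cokernelHomOfLeIso _).symm⟩
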